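/- Let 0 < α ≤ 1 and let n ≥ 2 be an integer. Then the function h_{n,α}(x) = (α n/(2|x|^{α+1})) (1 − |x|^{−α})^{n−2} (1 − α + (αn − 1)|x|^{−α}) 1_{(1,∞)}(|x|) is a probability density on ℝ, and ∫_ℝ (1 − |t x|)_+ h_{n,α}(x) dx = ((1 − |t|^α)_+)^n for all t ∈ ℝ. (Consequently the n-fold classical convolution power μ_α^{*n} equals the scale mixture μ_1 ∘ λ_{n,α}, where λ_{n,α} has density h_{n,α} and μ_1 has characteristic function (1 − |t|)_+.) -/

import Mathlib

/-!
For `x > 1` put `u = x^(-α)`. The function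
`Ψ_s(x) = ½ (1 - u)^(n-1) (1 + (αn - 1) u - s αn x^(1-α))`
satisfies `Ψ_s' = (1 - s x) h_{n,α}`, `Ψ_s(1) = 0`, `Ψ_s(1/s) = ½ (1 - s^α)^n` and
`Ψ_0(x) → ½` as `x → ∞`. Since `(1 - s x)_+` vanishes beyond `1/s`, the integral
`∫_1^∞ (1 - s x)_+ h_{n,α}(x) dx` equals `½ ((1 - s^α)_+)^n` for every `s ≥ 0`; the integrand
of the theorem is even in `x`, which accounts for the factor `2`. For `α ≤ 1` the density
is nonnegative because its last factor is `(1 - α)(1 - u) + α(n - 1)u`.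
-/

open MeasureTheory Set Filter Topology

/-- The density `h_{n,α}` of `(α δ̃₁ + (1-α) π̃_α)^{⊗_{μ₁} n}`:
`h_{n,α}(x) = (α n/(2|x|^(α+1))) (1 - |x|^(-α))^(n-2) (1 - α + (α n - 1)|x|^(-α))`
for `|x| > 1`, and `0` otherwise. -/
noncomputable def kendallMixDensity (α : ℝ) (n : ℕ) (x : ℝ) : ℝ :=
  if 1 < |x| then
    α * n / (2 * |x| ^ (α + 1)) * (1 - |x| ^ (-α)) ^ (n - 2)
      * (1 - α + (α * n - 1) * |x| ^ (-α))
  else 0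

noncomputable def kendallH (α : ℝ) (n : ℕ) (x : ℝ) : ℝ :=
  α * n / (2 * x ^ (α + 1)) * (1 - x ^ (-α)) ^ (n - 2) * (1 - α + (α * n - 1) * x ^ (-α))

noncomputable def kendallPsi (α : ℝ) (n : ℕ) (s x : ℝ) : ℝ :=
  (1 - x ^ (-α)) ^ (n - 1) * (1 + (α * n - 1) * x ^ (-α) - s * (α * n) * x ^ (1 - α)) / 2

section

variable {α : ℝ} {n : ℕ}

theorem kendallH_nonneg (hα : 0 ≤ α) (hα1 : α ≤ 1) (hn : 1 ≤ n) {x : ℝ} (hx : 1 ≤ x) :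
    0 ≤ kendallH α n x := by
  have hu0 : 0 ≤ x ^ (-α) := Real.rpow_nonneg (by linarith) _
  have hu1 : x ^ (-α) ≤ 1 := Real.rpow_le_one_of_one_le_of_nonpos hx (by linarith)
  have hn1 : (0 : ℝ) ≤ n - 1 := by
    rw [sub_nonneg]; exact_mod_cast hn
  have hlin : 1 - α + (α * n - 1) * x ^ (-α)
      = (1 - α) * (1 - x ^ (-α)) + α * (n - 1) * x ^ (-α) := by ring
  have hu1' : 0 ≤ 1 - x ^ (-α) := by linarith
  have hα1' : 0 ≤ 1 - α := by linarith
  unfold kendallH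
  rw [hlin]
  positivity

theorem continuousOn_kendallH : ContinuousOn (kendallH α n) (Ioi 0) := by
  intro x (hx : 0 < x)
  have hu : ContinuousAt (fun y : ℝ => y ^ (-α)) x :=
    Real.continuousAt_rpow_const _ _ (.inl hx.ne')
  have hv : ContinuousAt (fun y : ℝ => y ^ (α + 1)) x :=
    Real.continuousAt_rpow_const _ _ (.inl hx.ne')
  have hden : 2 * x ^ (α + 1) ≠ 0 := by positivity
  apply ContinuousAt.continuousWithinAt
  unfold kendallH
  fun_prop (disch := assumption)

theorem hasDerivAt_kendallPsi (hn : 2 ≤ n) (s : ℝ) {x : ℝ} (hx : 0 < x) :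
    HasDerivAt (kendallPsi α n s) ((1 - s * x) * kendallH α n x) x := by
  have hu : HasDerivAt (fun y : ℝ => y ^ (-α)) (-α * (x ^ (-α) / x)) x := by
    convert Real.hasDerivAt_rpow_const (p := -α) (.inl hx.ne') using 2
    rw [Real.rpow_sub hx, Real.rpow_one]
  have hv : HasDerivAt (fun y : ℝ => y ^ (1 - α)) ((1 - α) * x ^ (-α)) x := by
    convert Real.hasDerivAt_rpow_const (p := 1 - α) (.inl hx.ne') using 3
    ring
  have h := ((((hasDerivAt_const x 1).sub hu).pow (n - 1)).mul
    (((hasDerivAt_const x 1).add (hu.const_mul (α * n - 1))).sub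
      (hv.const_mul (s * (α * n))))).div_const 2
  refine h.congr_deriv ?_
  have hpow : (1 - x ^ (-α)) ^ (n - 1) = (1 - x ^ (-α)) ^ (n - 2) * (1 - x ^ (-α)) := by
    rw [← pow_succ]; congr 1; omega
  have hcast : ((n - 1 : ℕ) : ℝ) = n - 1 := by
    rw [Nat.cast_sub (by omega), Nat.cast_one]
  have hv_eq : x ^ (1 - α) = x * x ^ (-α) := by
    rw [Real.rpow_sub hx, Real.rpow_one, Real.rpow_neg hx.le, div_eq_mul_inv]
  have hw_eq : x ^ (α + 1) = x / x ^ (-α) := by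
    rw [Real.rpow_add hx, Real.rpow_one, Real.rpow_neg hx.le, div_inv_eq_mul, mul_comm]
  have hu_pos : 0 < x ^ (-α) := Real.rpow_pos_of_pos hx _
  simp only [Pi.sub_apply, Pi.add_apply, Pi.pow_apply]
  rw [show n - 1 - 1 = n - 2 by omega, hcast, hpow, hv_eq, kendallH, hw_eq]
  field_simp
  ring

theorem kendallPsi_one (hn : 2 ≤ n) (s : ℝ) : kendallPsi α n s 1 = 0 := by
  simp [kendallPsi, zero_pow (show n - 1 ≠ 0 by omega)]

theorem kendallPsi_inv (hn : 1 ≤ n) {s : ℝ} (hs : 0 < s) :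
    kendallPsi α n s s⁻¹ = (1 - s ^ α) ^ n / 2 := by
  have h1 : s⁻¹ ^ (-α) = s ^ α := by
    rw [Real.inv_rpow hs.le, Real.rpow_neg hs.le, inv_inv]
  have h2 : s * (α * n) * s⁻¹ ^ (1 - α) = α * n * s ^ α := by
    rw [Real.inv_rpow hs.le, ← Real.rpow_neg hs.le, neg_sub, Real.rpow_sub hs, Real.rpow_one]
    field_simp
  obtain ⟨m, rfl⟩ := Nat.exists_eq_add_of_le' hn
  rw [kendallPsi, h1, h2, Nat.add_sub_cancel, pow_succ]
  ring

theorem tendsto_kendallPsi_zero_atTop (hα : 0 < α) :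
    Tendsto (kendallPsi α n 0) atTop (𝓝 (1 / 2)) := by
  have hu : Tendsto (fun x : ℝ => x ^ (-α)) atTop (𝓝 0) := tendsto_rpow_neg_atTop hα
  have hφ : Continuous (fun u : ℝ => (1 - u) ^ (n - 1) * (1 + (α * n - 1) * u) / 2) := by
    fun_prop
  convert (hφ.tendsto 0).comp hu using 2
  · ext x
    simp [kendallPsi]
  · simp

theorem integral_Ioi_one_kendallH (hα : 0 < α) (hα1 : α ≤ 1) (hn : 2 ≤ n) :
    ∫ x in Ioi 1, kendallH α n x = 1 / 2 := by
  have hderiv : ∀ x ∈ Ioi (1 : ℝ), HasDerivAt (kendallPsi α n 0) (kendallH α n x) x :=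
    fun x hx => by simpa using hasDerivAt_kendallPsi hn 0 (zero_lt_one.trans hx)
  rw [integral_Ioi_of_hasDerivAt_of_nonneg
    (hasDerivAt_kendallPsi hn 0 one_pos).continuousAt.continuousWithinAt hderiv
    (fun x hx => kendallH_nonneg hα.le hα1 (by omega) (le_of_lt hx))
    (tendsto_kendallPsi_zero_atTop hα), kendallPsi_one hn, sub_zero]

theorem integral_Ioi_one_max_mul_kendallH (hα : 0 < α) (hα1 : α ≤ 1) (hn : 2 ≤ n) {s : ℝ}
    (hs : 0 ≤ s) :
    ∫ x in Ioi 1, max (1 - s * x) 0 * kendallH α n x = (max (1 - s ^ α) 0) ^ n / 2 := by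
  rcases hs.eq_or_lt with rfl | hs0
  · simp [Real.zero_rpow hα.ne', integral_Ioi_one_kendallH hα hα1 hn]
  rcases le_or_gt 1 s with hs1 | hs1
  · have hzero : ∀ x ∈ Ioi (1 : ℝ), max (1 - s * x) 0 * kendallH α n x = 0 := fun x hx => by
      rw [max_eq_right (by nlinarith [mem_Ioi.1 hx]), zero_mul]
    rw [setIntegral_congr_fun measurableSet_Ioi hzero, integral_zero,
      max_eq_right (by linarith [Real.one_le_rpow hs1 hα.le]), zero_pow (by omega), zero_div]
  have hb : 1 < s⁻¹ := (one_lt_inv₀ hs0).2 hs1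
  have hpos : uIcc 1 s⁻¹ ⊆ Ioi 0 := fun x hx =>
    zero_lt_one.trans_le (uIcc_of_le hb.le ▸ hx).1
  calc ∫ x in Ioi 1, max (1 - s * x) 0 * kendallH α n x
      = ∫ x in Ioc 1 s⁻¹, max (1 - s * x) 0 * kendallH α n x :=
        setIntegral_eq_of_subset_of_forall_sdiff_eq_zero measurableSet_Ioi Ioc_subset_Ioi_self
          fun x hx => by
            have hx' : s⁻¹ < x := not_le.1 fun h => hx.2 ⟨hx.1, h⟩
            have : 1 < s * x := (inv_lt_iff_one_lt_mul₀' hs0).1 hx'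
            rw [max_eq_right (by linarith), zero_mul]
    _ = ∫ x in (1)..s⁻¹, (1 - s * x) * kendallH α n x := by
        rw [intervalIntegral.integral_of_le hb.le]
        refine setIntegral_congr_fun measurableSet_Ioc fun x hx => ?_
        have : s * x ≤ 1 := mul_inv_cancel₀ hs0.ne' ▸ mul_le_mul_of_nonneg_left hx.2 hs
        rw [max_eq_left (by linarith)]
    _ = kendallPsi α n s s⁻¹ - kendallPsi α n s 1 :=
        intervalIntegral.integral_eq_sub_of_hasDerivAt
          (fun x hx => hasDerivAt_kendallPsi hn s (hpos hx))
          (((continuousOn_const.sub (continuousOn_const.mul continuousOn_id)).mul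
            (continuousOn_kendallH.mono hpos)).intervalIntegrable)
    _ = (max (1 - s ^ α) 0) ^ n / 2 := by
        rw [kendallPsi_inv (by omega) hs0, kendallPsi_one hn, sub_zero,
          max_eq_left (by linarith [Real.rpow_le_one hs hs1.le hα.le])]

theorem kendallMixDensity_nonneg (hα : 0 ≤ α) (hα1 : α ≤ 1) (hn : 1 ≤ n) (x : ℝ) :
    0 ≤ kendallMixDensity α n x := by
  unfold kendallMixDensity
  split_ifs with hx
  exacts [kendallH_nonneg hα hα1 hn hx.le, le_rfl]

theorem integral_comp_abs_mul_kendallMixDensity (g : ℝ → ℝ) :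
    ∫ x, g |x| * kendallMixDensity α n x = 2 * ∫ x in Ioi 1, g x * kendallH α n x := by
  have hsymm : ∀ x, kendallMixDensity α n |x| = kendallMixDensity α n x := fun x => by
    simp [kendallMixDensity]
  conv_lhs => enter [2, x]; rw [← hsymm x]
  rw [integral_comp_abs (f := fun y => g y * kendallMixDensity α n y),
    setIntegral_eq_of_subset_of_forall_sdiff_eq_zero measurableSet_Ioi
      (Ioi_subset_Ioi zero_le_one) fun x hx => ?_]
  · congr 1
    refine setIntegral_congr_fun measurableSet_Ioi fun x (hx : 1 < x) => ?_
    simp [kendallMixDensity, kendallH, abs_of_pos (zero_lt_one.trans hx), hx]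
  · have : ¬ 1 < |x| := by
      rw [abs_of_pos hx.1]; exact hx.2
    simp [kendallMixDensity, this]

end

/-- For `0 < α ≤ 1` and `n ≥ 2`, the function `h_{n,α}` is a probability density on `ℝ`
and `∫ (1 - |t x|)_+ h_{n,α}(x) dx = ((1 - |t|^α)_+)^n` for all `t`.  Consequently the
`n`-fold classical convolution power `μ_α^{*n}` is the scale mixture of `μ₁` (the measure
with characteristic function `(1 - |t|)_+`) by the measure with density `h_{n,α}`. -/
theorem kendallMixDensity_prob
    (α : ℝ) (hα : 0 < α) (hα1 : α ≤ 1) (n : ℕ) (hn : 2 ≤ n) :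
    (∀ x : ℝ, 0 ≤ kendallMixDensity α n x)
    ∧ (∫ x : ℝ, kendallMixDensity α n x) = 1
    ∧ ∀ t : ℝ,
        ∫ x : ℝ, max (1 - |t * x|) 0 * kendallMixDensity α n x
          = (max (1 - |t| ^ α) 0) ^ n := by
  refine ⟨kendallMixDensity_nonneg hα.le hα1 (by omega), ?_, fun t => ?_⟩
  · have h := integral_comp_abs_mul_kendallMixDensity (α := α) (n := n) fun _ => 1
    simp only [one_mul] at h
    rw [h, integral_Ioi_one_kendallH hα hα1 hn]
    norm_num
  · simp_rw [abs_mul]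
    rw [integral_comp_abs_mul_kendallMixDensity (fun y => max (1 - |t| * y) 0),
      integral_Ioi_one_max_mul_kendallH hα hα1 hn (abs_nonneg t)]
    ring
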